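/- arXiv:2401.06501 — 2 statements merged into one kernel-verified Lean document; each statement's English description precedes it below -/
import Mathlib

section
/- Take k₁ = 1 and, for a nonnegative integer τ, set g(τ) = 𝓕₂⁽¹⁾(a, b₁, b₂; c₁, c₂; τ, t₂, 1, k₂, x, y). Then for every r ∈ ℕ the r-th forward difference of g in the discrete variable satisfies Σ_{j=0}^{r} (−1)^{r−j} binom(r,j) g(t₁ + j) = ((a)_r (b₁)_r x^r / (c₁)_r) · 𝓕₂⁽¹⁾(a + r, b₁ + r, b₂; c₁ + r, c₂; t₁, t₂, 1, k₂, x, y). -/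
/-!
With `k₁ = 1`, `(-1)^m (-τ)_m / m! = binom(τ, m)`, so `g(τ) = ∑ₘ binom(τ, m) Aₘ` is a Newton
series in `τ` whose coefficients `Aₘ` (`F2oneCoeff`) do not depend on `τ`. Since
`Δ binom(τ, m) = binom(τ, m - 1)`, the `r`-th difference is `Δ^r g(t₁) = ∑ₘ binom(t₁, m) A_{r+m}`,
and `(z)_{r+m} = (z)_r (z+r)_m` turns `A_{r+m}` into `(a)_r (b₁)_r x^r / (c₁)_r` times the
coefficient `Aₘ` with `a, b₁, c₁` shifted by `r`.
-/

open Complex Finset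

/-- Ascending Pochhammer symbol `(z)_j = z (z+1) ⋯ (z+j−1)`, with `(z)_0 = 1`. -/
noncomputable def poch (z : ℂ) (j : ℕ) : ℂ := (ascPochhammer ℂ j).eval z

/-- The first discrete Appell function `𝓕₂⁽¹⁾(a,b₁,b₂;c₁,c₂;t₁,t₂,k₁,k₂,x,y)`.
Since `(−t₁)_{m k₁} = 0` once `m k₁ > t₁` and `(−t₂)_{n k₂} = 0` once `n k₂ > t₂`
(for `k₁, k₂ ≥ 1`), the doubly infinite sum reduces to this finite sum. -/
noncomputable def F2one (a b₁ b₂ c₁ c₂ : ℂ) (t₁ t₂ k₁ k₂ : ℕ) (x y : ℂ) : ℂ :=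
  ∑ m ∈ Finset.range (t₁ + 1), ∑ n ∈ Finset.range (t₂ + 1),
    poch a (m + n) * poch b₁ m * poch b₂ n * (-1 : ℂ) ^ (m * k₁) * poch (-(t₁ : ℂ)) (m * k₁)
      * (-1 : ℂ) ^ (n * k₂) * poch (-(t₂ : ℂ)) (n * k₂) * x ^ m * y ^ n
    / (poch c₁ m * poch c₂ n * (Nat.factorial m : ℂ) * (Nat.factorial n : ℂ))

lemma poch_add (z : ℂ) (m n : ℕ) : poch z (m + n) = poch z m * poch (z + m) n := by
  simpa [poch, Polynomial.eval_comp] using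
    (congrArg (Polynomial.eval z) (ascPochhammer_mul ℂ m n)).symm

lemma neg_one_pow_mul_poch_neg_natCast (t m : ℕ) :
    (-1) ^ m * poch (-(t : ℂ)) m = t.descFactorial m := by
  rw [poch, ascPochhammer_eval_neg_eq_descPochhammer, ← mul_assoc, ← mul_pow, neg_one_mul,
    neg_neg, one_pow, one_mul, descPochhammer_eval_eq_descFactorial]

lemma sum_neg_one_pow_mul_choose_mul_choose_add (r m t : ℕ) :
    ∑ j ∈ range (r + 1), (-1 : ℤ) ^ (r - j) * r.choose j * (t + j).choose m =
      if r ≤ m then (t.choose (m - r) : ℤ) else 0 := by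
  have hΔ := fwdDiff_iter_eq_sum_shift (1 : ℕ) (fun x ↦ (x.choose m : ℤ)) r t
  simp only [smul_eq_mul, mul_one] at hΔ
  rw [← hΔ]
  split_ifs with hrm
  · obtain ⟨j, rfl⟩ := Nat.exists_eq_add_of_le hrm
    rw [fwdDiff_iter_choose, Nat.add_sub_cancel_left]
  · obtain ⟨k, rfl⟩ := Nat.exists_eq_add_of_lt (not_le.mp hrm)
    rw [show m + k + 1 = (k + 1) + m by ring, Function.iterate_add_apply,
      (by simpa using fwdDiff_iter_choose 0 m :
        (fwdDiff 1)^[m] (fun x : ℕ ↦ (x.choose m : ℤ)) = fun _ ↦ 1),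
      Function.iterate_succ_apply, fwdDiff_const, Function.iterate_fixed (fwdDiff_const 1 (0 : ℤ))]

lemma sum_neg_one_pow_mul_choose_mul_sum_choose_mul {R : Type*} [CommRing R] (r t : ℕ)
    (A : ℕ → R) :
    ∑ j ∈ range (r + 1), (-1 : R) ^ (r - j) * r.choose j *
        ∑ m ∈ range (t + r + 1), ((t + j).choose m : R) * A m =
      ∑ m ∈ range (t + 1), (t.choose m : R) * A (r + m) := by
  have hcoeff (m : ℕ) : ∑ j ∈ range (r + 1), (-1 : R) ^ (r - j) * r.choose j * (t + j).choose m =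
      if r ≤ m then (t.choose (m - r) : R) else 0 := by
    simpa [apply_ite] using
      congrArg (Int.cast : ℤ → R) (sum_neg_one_pow_mul_choose_mul_choose_add r m t)
  calc _ = ∑ m ∈ range (t + r + 1),
        (∑ j ∈ range (r + 1), (-1 : R) ^ (r - j) * r.choose j * (t + j).choose m) * A m := by
        simp_rw [mul_sum, sum_mul]
        rw [sum_comm]
        simp only [mul_assoc]
    _ = ∑ m ∈ range (r + (t + 1)), if r ≤ m then (t.choose (m - r) : R) * A m else 0 := by
        simp only [hcoeff, ite_mul, zero_mul, show t + r + 1 = r + (t + 1) by ring]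
    _ = _ := by
        rw [sum_range_add, sum_eq_zero fun m hm ↦ if_neg (not_le.mpr (mem_range.mp hm)), zero_add]
        simp

noncomputable def F2oneCoeff (a b₁ b₂ c₁ c₂ : ℂ) (t₂ k₂ : ℕ) (x y : ℂ) (m : ℕ) : ℂ :=
  ∑ n ∈ range (t₂ + 1),
    poch a (m + n) * poch b₁ m * poch b₂ n * (-1 : ℂ) ^ (n * k₂) * poch (-(t₂ : ℂ)) (n * k₂)
      * x ^ m * y ^ n / (poch c₁ m * poch c₂ n * (n.factorial : ℂ))

lemma F2one_one_eq_sum_choose_mul (a b₁ b₂ c₁ c₂ : ℂ) (τ t₂ k₂ : ℕ) (x y : ℂ) {N : ℕ}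
    (hτ : τ ≤ N) :
    F2one a b₁ b₂ c₁ c₂ τ t₂ 1 k₂ x y =
      ∑ m ∈ range (N + 1), (τ.choose m : ℂ) * F2oneCoeff a b₁ b₂ c₁ c₂ t₂ k₂ x y m := by
  have hchoose (m : ℕ) : (-1 : ℂ) ^ m * poch (-(τ : ℂ)) m / m.factorial = τ.choose m := by
    rw [neg_one_pow_mul_poch_neg_natCast, Nat.descFactorial_eq_factorial_mul_choose]
    push_cast
    exact mul_div_cancel_left₀ _ (Nat.cast_ne_zero.mpr m.factorial_ne_zero)
  calc F2one a b₁ b₂ c₁ c₂ τ t₂ 1 k₂ x y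
      = ∑ m ∈ range (τ + 1), (τ.choose m : ℂ) * F2oneCoeff a b₁ b₂ c₁ c₂ t₂ k₂ x y m := by
        simp only [F2one, F2oneCoeff, ← hchoose, mul_sum, mul_one]
        exact sum_congr rfl fun m _ ↦ sum_congr rfl fun n _ ↦ by ring
    _ = _ := sum_subset (range_subset_range.mpr (by omega)) fun m _ hm ↦ by
        rw [Nat.choose_eq_zero_of_lt (by simpa using hm), Nat.cast_zero, zero_mul]

lemma F2oneCoeff_add_left (a b₁ b₂ c₁ c₂ : ℂ) (t₂ k₂ : ℕ) (x y : ℂ) (r m : ℕ) :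
    F2oneCoeff a b₁ b₂ c₁ c₂ t₂ k₂ x y (r + m) =
      poch a r * poch b₁ r * x ^ r / poch c₁ r *
        F2oneCoeff (a + r) (b₁ + r) b₂ (c₁ + r) c₂ t₂ k₂ x y m := by
  simp only [F2oneCoeff, mul_sum, add_assoc, poch_add, pow_add]
  exact sum_congr rfl fun n _ ↦ by ring

theorem forward_difference_formula_general (a b₁ b₂ c₁ c₂ x y : ℂ) (k₂ : ℕ)
    (t₁ t₂ : ℕ)
    (g : ℕ → ℂ) (hg : ∀ τ : ℕ, g τ = F2one a b₁ b₂ c₁ c₂ τ t₂ 1 k₂ x y)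
    (r : ℕ) :
    ∑ j ∈ Finset.range (r + 1), (-1 : ℂ) ^ (r - j) * (r.choose j : ℂ) * g (t₁ + j) =
      poch a r * poch b₁ r * x ^ r / poch c₁ r *
        F2one (a + r) (b₁ + r) b₂ (c₁ + r) c₂ t₁ t₂ 1 k₂ x y := by
  set A := F2oneCoeff a b₁ b₂ c₁ c₂ t₂ k₂ x y
  have hg_newton : ∀ j ∈ range (r + 1),
      g (t₁ + j) = ∑ m ∈ range (t₁ + r + 1), ((t₁ + j).choose m : ℂ) * A m := fun j hj ↦
    (hg _).trans (F2one_one_eq_sum_choose_mul _ _ _ _ _ _ _ _ _ _ (by rw [mem_range] at hj; omega))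
  calc _ = ∑ j ∈ range (r + 1), (-1 : ℂ) ^ (r - j) * r.choose j *
          ∑ m ∈ range (t₁ + r + 1), ((t₁ + j).choose m : ℂ) * A m :=
        sum_congr rfl fun j hj ↦ by rw [hg_newton j hj]
    _ = ∑ m ∈ range (t₁ + 1), (t₁.choose m : ℂ) * A (r + m) :=
        sum_neg_one_pow_mul_choose_mul_sum_choose_mul r t₁ A
    _ = _ := by
        rw [F2one_one_eq_sum_choose_mul _ _ _ _ _ _ _ _ _ _ le_rfl, mul_sum]
        exact sum_congr rfl fun m _ ↦ by simp only [A, F2oneCoeff_add_left]; ring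

/-- The `r`-th forward difference formula (paper's (4.1)): for `k₁ = 1` and
`g(τ) = 𝓕₂⁽¹⁾(a,b₁,b₂;c₁,c₂;τ,t₂,1,k₂,x,y)`,
`Δ^r g(t₁) = Σ_{j=0}^{r} (−1)^{r−j} C(r,j) g(t₁+j)
  = ((a)_r (b₁)_r x^r / (c₁)_r) 𝓕₂⁽¹⁾(a+r, b₁+r, b₂; c₁+r, c₂; t₁, t₂, 1, k₂, x, y)`. -/
theorem forward_difference_formula (a b₁ b₂ c₁ c₂ x y : ℂ) (k₂ : ℕ) (hk₂ : 0 < k₂)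
    (hc₁ : ∀ n : ℕ, c₁ ≠ -(n : ℂ)) (hc₂ : ∀ n : ℕ, c₂ ≠ -(n : ℂ))
    (t₁ t₂ : ℕ)
    (g : ℕ → ℂ) (hg : ∀ τ : ℕ, g τ = F2one a b₁ b₂ c₁ c₂ τ t₂ 1 k₂ x y)
    (r : ℕ) :
    ∑ j ∈ Finset.range (r + 1), (-1 : ℂ) ^ (r - j) * (r.choose j : ℂ) * g (t₁ + j) =
      poch a r * poch b₁ r * x ^ r / poch c₁ r *
        F2one (a + r) (b₁ + r) b₂ (c₁ + r) c₂ t₁ t₂ 1 k₂ x y :=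
  forward_difference_formula_general a b₁ b₂ c₁ c₂ x y k₂ t₁ t₂ g hg r
end

section
/- For every z ∈ ℂ with |z| < 1 and all x, y ∈ ℂ, the series Σ_{r=0}^{∞} ((a)_r / r!) z^r · 𝓕₂⁽¹⁾(a + r, b₁, b₂; c₁, c₂; t₁, t₂, k₁, k₂, x, y) converges and equals (1 − z)^{−a} · 𝓕₂⁽¹⁾(a, b₁, b₂; c₁, c₂; t₁, t₂, k₁, k₂, x/(1−z), y/(1−z)), where (1 − z)^{−a} is the principal complex power. -/
/-!
Expanding `(a + r)_{m+n} (a)_r = (a)_{m+n} (a + m + n)_r`, the coefficient of each monomial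
`x^m y^n` of the discrete Appell function becomes `(a)_{m+n}` times the binomial series
`Σ_r ((a + m + n)_r / r!) z^r = (1 - z)^{-(a + m + n)}`. Since the Appell sum is finite, the
series can be summed term by term, and the factor `(1 - z)^{-(m + n)}` is absorbed into
`x^m y^n`.
-/

open Complex Finset

open scoped Nat

lemma choose_add_sub_one_eq_poch_div (w : ℂ) (r : ℕ) :
    Ring.choose (w + r - 1) r = poch w r / r ! := by
  rw [← Ring.multichoose_eq, eq_div_iff (Nat.cast_ne_zero.2 r.factorial_ne_zero), poch,
    ← Polynomial.ascPochhammer_smeval_eq_eval, Polynomial.ascPochhammer_smeval_cast ℕ,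
    ← Ring.factorial_nsmul_multichoose_eq_ascPochhammer, nsmul_eq_mul, mul_comm]

theorem hasSum_poch_div_factorial_mul_pow (w : ℂ) {z : ℂ} (hz : ‖z‖ < 1) :
    HasSum (fun r : ℕ => poch w r / r ! * z ^ r) ((1 - z) ^ (-w)) := by
  have := (one_div_one_sub_cpow_hasFPowerSeriesOnBall_zero w).hasSum (y := z)
    (by rw [← ENNReal.ofReal_one, Metric.eball_ofReal]; simpa using hz)
  simpa [FormalMultilinearSeries.ofScalars_apply_eq, choose_add_sub_one_eq_poch_div, cpow_neg,
    mul_comm] using this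

lemma poch_add_s14 (u : ℂ) (i j : ℕ) : poch u (i + j) = poch u i * poch (u + i) j := by
  rw [poch, ← ascPochhammer_mul]
  simp [poch, Polynomial.eval_comp]

lemma poch_mul_poch_add_comm (a : ℂ) (r s : ℕ) :
    poch a r * poch (a + r) s = poch a s * poch (a + s) r := by
  rw [← poch_add_s14, ← poch_add_s14, add_comm]

lemma one_sub_ne_zero_of_norm_lt_one {z : ℂ} (hz : ‖z‖ < 1) : 1 - z ≠ 0 :=
  sub_ne_zero.2 fun h => by simp [← h] at hz

theorem hasSum_poch_div_factorial_mul_pow_mul_poch_add (a : ℂ) {z : ℂ} (hz : ‖z‖ < 1) (s : ℕ) :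
    HasSum (fun r : ℕ => poch a r / r ! * z ^ r * poch (a + r) s)
      ((1 - z) ^ (-a) * poch a s / (1 - z) ^ s) := by
  have h : HasSum (fun r : ℕ => poch a s * (poch (a + s) r / r ! * z ^ r))
      (poch a s * (1 - z) ^ (-(a + s))) :=
    (hasSum_poch_div_factorial_mul_pow (a + s) hz).mul_left _
  rw [neg_add, cpow_add _ _ (one_sub_ne_zero_of_norm_lt_one hz), cpow_neg _ (s : ℂ),
    cpow_natCast] at h
  convert h using 1
  · funext r
    linear_combination (z ^ r / r !) * poch_mul_poch_add_comm a r s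
  · ring

noncomputable def f2oneCoeff (b₁ b₂ c₁ c₂ : ℂ) (t₁ t₂ k₁ k₂ m n : ℕ) : ℂ :=
  poch b₁ m * poch b₂ n * (-1) ^ (m * k₁) * poch (-(t₁ : ℂ)) (m * k₁)
    * (-1) ^ (n * k₂) * poch (-(t₂ : ℂ)) (n * k₂) / (poch c₁ m * poch c₂ n * m ! * n !)

lemma F2one_eq_sum_poch_mul (a b₁ b₂ c₁ c₂ : ℂ) (t₁ t₂ k₁ k₂ : ℕ) (x y : ℂ) :
    F2one a b₁ b₂ c₁ c₂ t₁ t₂ k₁ k₂ x y = ∑ m ∈ range (t₁ + 1), ∑ n ∈ range (t₂ + 1),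
      poch a (m + n) * (f2oneCoeff b₁ b₂ c₁ c₂ t₁ t₂ k₁ k₂ m n * x ^ m * y ^ n) := by
  refine sum_congr rfl fun m _ => sum_congr rfl fun n _ => ?_
  simp only [f2oneCoeff]
  ring

theorem infinite_summation_formula_general (a b₁ b₂ c₁ c₂ : ℂ) (k₁ k₂ : ℕ)
    (t₁ t₂ : ℕ) (z : ℂ) (hz : ‖z‖ < 1) (x y : ℂ) :
    HasSum
      (fun r : ℕ =>
        poch a r / (Nat.factorial r : ℂ) * z ^ r *
          F2one (a + r) b₁ b₂ c₁ c₂ t₁ t₂ k₁ k₂ x y)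
      ((1 - z) ^ (-a) *
        F2one a b₁ b₂ c₁ c₂ t₁ t₂ k₁ k₂ (x / (1 - z)) (y / (1 - z))) := by
  simp_rw [F2one_eq_sum_poch_mul, mul_sum]
  refine hasSum_sum fun m _ => hasSum_sum fun n _ => ?_
  have h : HasSum _ (_ * (f2oneCoeff b₁ b₂ c₁ c₂ t₁ t₂ k₁ k₂ m n * x ^ m * y ^ n)) :=
    (hasSum_poch_div_factorial_mul_pow_mul_poch_add a hz (m + n)).mul_right _
  convert h using 1
  · funext r
    ring
  · rw [div_pow, div_pow, pow_add]
    ring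

/-- The infinite summation formula (paper's (5.3)):
`Σ_{r≥0} ((a)_r/r!) z^r 𝓕₂⁽¹⁾(a+r, b₁, b₂; c₁, c₂; t₁, t₂, k₁, k₂, x, y)`
converges, with sum `(1−z)^{−a} 𝓕₂⁽¹⁾(a, b₁, b₂; c₁, c₂; t₁, t₂, k₁, k₂, x/(1−z), y/(1−z))`,
for `|z| < 1`. -/
theorem infinite_summation_formula (a b₁ b₂ c₁ c₂ : ℂ) (k₁ k₂ : ℕ)
    (hk₁ : 0 < k₁) (hk₂ : 0 < k₂)
    (hc₁ : ∀ n : ℕ, c₁ ≠ -(n : ℂ)) (hc₂ : ∀ n : ℕ, c₂ ≠ -(n : ℂ))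
    (t₁ t₂ : ℕ) (z : ℂ) (hz : ‖z‖ < 1) (x y : ℂ) :
    HasSum
      (fun r : ℕ =>
        poch a r / (Nat.factorial r : ℂ) * z ^ r *
          F2one (a + r) b₁ b₂ c₁ c₂ t₁ t₂ k₁ k₂ x y)
      ((1 - z) ^ (-a) *
        F2one a b₁ b₂ c₁ c₂ t₁ t₂ k₁ k₂ (x / (1 - z)) (y / (1 - z))) :=
  infinite_summation_formula_general a b₁ b₂ c₁ c₂ k₁ k₂ t₁ t₂ z hz x y
end
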